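/- Let k be a field and let monomials f_0,…,f_m of degree d in k[x_0,…,x_n] satisfy the canonical restrictions with dual monomials f̂_j = x^α/f_j. If x_0 does not divide f_0 and x_i/x_0 ∈ k(f̂_0,…,f̂_m) for all i = 1,…,n, then x_0^{|α|−d} ∈ k(f̂_0,…,f̂_m). -/
import Mathlib


open MvPolynomial

/-- The rational function field `k(x_0,…,x_n)`. -/
abbrev RatFuncField (k : Type*) [Field k] (n : ℕ) : Type _ :=
  FractionRing (MvPolynomial (Fin (n + 1)) k)

/-- The variable `x_i` viewed inside `k(x_0,…,x_n)`. -/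
noncomputable def xv {k : Type*} [Field k] {n : ℕ} (i : Fin (n + 1)) : RatFuncField k n :=
  algebraMap (MvPolynomial (Fin (n + 1)) k) (RatFuncField k n) (X i)

/-- for monomials `f_j = x^{a_j}` of degree `d` satisfying the canonical
restrictions, with duals `f̂_j = x^α/f_j`, if `x_0 ∤ f_0` and all ratios `x_i/x_0` lie in
`k(f̂_0,…,f̂_m)`, then `x_0^{|α|−d} ∈ k(f̂_0,…,f̂_m)`. -/
theorem power_of_x0_mem_dual_field
    {k : Type*} [Field k] {n m d : ℕ}
    (a : Fin (m + 1) → Fin (n + 1) → ℕ)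
    (hdeg : ∀ j, ∑ i, a j i = d)
    (hnofix : ∀ i, ∃ j, a j i = 0)
    (hall : ∀ i, ∃ j, a j i ≠ 0)
    (α : Fin (n + 1) → ℕ) (hα : ∀ i, α i = Finset.univ.sup fun j => a j i)
    (hx0 : a 0 0 = 0)
    (hratio : ∀ i : Fin n, (xv i.succ : RatFuncField k n) / xv 0 ∈
      IntermediateField.adjoin k
        (Set.range fun j => ∏ i, (xv i : RatFuncField k n) ^ (α i - a j i))) :
    (xv 0 : RatFuncField k n) ^ ((∑ i, α i) - d) ∈
      IntermediateField.adjoin k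
        (Set.range fun j => ∏ i, (xv i : RatFuncField k n) ^ (α i - a j i)) := by
  set F := IntermediateField.adjoin k
      (Set.range fun j => ∏ i, (xv i : RatFuncField k n) ^ (α i - a j i)) with hF
  have hx : ∀ i : Fin (n + 1), (xv i : RatFuncField k n) ≠ 0 := by
    intro i h
    exact X_ne_zero (R := k) i (IsFractionRing.to_map_eq_zero_iff.mp h)
  have hle : ∀ j i, a j i ≤ α i := fun j i => by
    rw [hα i]; exact Finset.le_sup (f := fun j => a j i) (Finset.mem_univ j)
  have hsum : ∑ i, (α i - a 0 i) + d = ∑ i, α i := by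
    rw [← hdeg 0, ← Finset.sum_add_distrib]
    exact Finset.sum_congr rfl fun i _ => Nat.sub_add_cancel (hle 0 i)
  have hd : (∑ i, α i) - d = α 0 + ∑ i : Fin n, (α i.succ - a 0 i.succ) := by
    have h2 : ∑ i, (α i - a 0 i) = (α 0 - a 0 0) + ∑ i : Fin n, (α i.succ - a 0 i.succ) :=
      Fin.sum_univ_succ _
    rw [hx0, Nat.sub_zero] at h2
    omega
  have key : (xv 0 : RatFuncField k n) ^ ((∑ i, α i) - d)
      = (∏ i, (xv i : RatFuncField k n) ^ (α i - a 0 i)) *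
        ∏ i : Fin n, ((xv i.succ : RatFuncField k n) / xv 0)⁻¹ ^ (α i.succ - a 0 i.succ) := by
    rw [Fin.prod_univ_succ, hx0, Nat.sub_zero, mul_assoc, ← Finset.prod_mul_distrib]
    have h3 : ∀ i : Fin n,
        (xv i.succ : RatFuncField k n) ^ (α i.succ - a 0 i.succ) *
          ((xv i.succ : RatFuncField k n) / xv 0)⁻¹ ^ (α i.succ - a 0 i.succ)
        = (xv 0 : RatFuncField k n) ^ (α i.succ - a 0 i.succ) := by
      intro i
      rw [inv_div, div_pow, mul_comm, div_mul_cancel₀ _ (pow_ne_zero _ (hx _))]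
    rw [Finset.prod_congr rfl fun i _ => h3 i, Finset.prod_pow_eq_pow_sum, ← pow_add, hd]
  rw [key]
  refine mul_mem ?_ (prod_mem fun i _ => pow_mem (inv_mem (hratio i)) _)
  exact IntermediateField.subset_adjoin k _ ⟨0, rfl⟩
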